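/- arXiv:math/0511454 — 5 statements merged into one kernel-verified Lean document; each statement's English description precedes it below -/
import Mathlib

section
/- With the notation of the context, 𝒜_ℚ ∩ M(A,B) = 𝒜 and ℬ_ℚ ∩ M(A,B) = ℬ. Equivalently: if α : A → ℚ[G] is such that α(a)(e − μ(b)) ∈ ℤ[G] for all a ∈ A and b ∈ B, then there exists α′ : A → ℤ[G] with α′(a)(e − μ(b)) = α(a)(e − μ(b)) for all a ∈ A, b ∈ B; and if β : B → ℚ[G] is such that β(b)(e − μ(a)) ∈ ℤ[G] for all a ∈ A and b ∈ B, then there exists β′ : B → ℤ[G] with β′(b)(e − μ(a)) = β(b)(e − μ(a)) for all a ∈ A, b ∈ B. -/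
open MonoidAlgebra

/-- The integral group ring ℤ[G]. -/
noncomputable abbrev ZG (G : Type) [CommGroup G] := MonoidAlgebra ℤ G

/-- The rational group ring ℚ[G]. -/
noncomputable abbrev QG (G : Type) [CommGroup G] := MonoidAlgebra ℚ G

/-- The canonical embedding ℤ[G] → ℚ[G]. -/
noncomputable def toQ (G : Type) [CommGroup G] : ZG G →ₐ[ℤ] QG G :=
  MonoidAlgebra.lift ℤ (QG G) G (MonoidAlgebra.of ℚ G)

/-!
For `x ∈ ℚ[G]`, the `g` with `x (1 - g) ∈ ℤ[G]` form a subgroup, since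
`1 - g h = (1 - g) + (1 - h) g` and `1 - g⁻¹ = -(1 - g) g⁻¹`; so integrality for a generating set
gives it for all `g`. The coefficient of `x (1 - g)` at `t` is `x t - x (t g⁻¹)`, hence all
differences of coefficients of `x` are integers, and rounding every coefficient of `x` down yields
`x' ∈ ℤ[G]` with the same differences, i.e. `x' (1 - g) = x (1 - g)` for every `g`.
-/

namespace MonoidAlgebra

variable {G : Type} [CommGroup G]

lemma toQ_eq_mapAlgHom : toQ G = mapAlgHom G (Algebra.ofId ℤ ℚ) := by
  ext g : 2
  simp [toQ]

lemma coeff_toQ (z : ZG G) (g : G) : (toQ G z).coeff g = z.coeff g := by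
  simp [toQ_eq_mapAlgHom]

lemma toQ_of (g : G) : toQ G (of ℤ G g) = of ℚ G g := lift_of _ _

lemma coeff_mul_one_sub_of (x : QG G) (g t : G) :
    (x * (1 - of ℚ G g)).coeff t = x.coeff t - x.coeff (t * g⁻¹) := by
  simp [mul_sub, of_apply]

def integralDiffSubgroup (x : QG G) : Subgroup G where
  carrier := {g | x * (1 - of ℚ G g) ∈ (toQ G).range}
  one_mem' := ⟨0, by rw [map_one, sub_self, mul_zero, map_zero]⟩
  mul_mem' {g h} hg hh := by
    have hsplit : x * (1 - of ℚ G (g * h)) =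
        x * (1 - of ℚ G g) + x * (1 - of ℚ G h) * toQ G (of ℤ G g) := by
      rw [toQ_of, map_mul]; ring
    rw [Set.mem_ofPred_eq, hsplit]
    exact add_mem hg (mul_mem hh ⟨_, rfl⟩)
  inv_mem' {g} hg := by
    have hinv : of ℚ G g * of ℚ G g⁻¹ = 1 := by rw [← map_mul, mul_inv_cancel, map_one]
    have hsplit : x * (1 - of ℚ G g⁻¹) = -(x * (1 - of ℚ G g) * toQ G (of ℤ G g⁻¹)) := by
      rw [toQ_of]; linear_combination (-x) * hinv
    rw [Set.mem_ofPred_eq, hsplit]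
    exact neg_mem (mul_mem hg ⟨_, rfl⟩)

lemma mul_one_sub_of_mem_range_of_closure_eq_top {S : Set G} (hS : Subgroup.closure S = ⊤)
    {x : QG G} (hx : ∀ g ∈ S, x * (1 - of ℚ G g) ∈ (toQ G).range) (g : G) :
    x * (1 - of ℚ G g) ∈ (toQ G).range := by
  have hle : Subgroup.closure S ≤ integralDiffSubgroup x := (Subgroup.closure_le _).2 hx
  exact hle (hS ▸ Subgroup.mem_top g)

lemma exists_coeff_eq_coeff_add_intCast {x : QG G}
    (hx : ∀ g, x * (1 - of ℚ G g) ∈ (toQ G).range) (s t : G) :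
    ∃ n : ℤ, x.coeff t = x.coeff s + n := by
  obtain ⟨z, hz : toQ G z = _⟩ := hx (s⁻¹ * t)
  refine ⟨z.coeff t, ?_⟩
  rw [← coeff_toQ, hz, coeff_mul_one_sub_of, mul_inv_rev, inv_inv, mul_inv_cancel_left,
    add_sub_cancel]

noncomputable def floorCoeff (x : QG G) : ZG G :=
  ofCoeff (x.coeff.mapRange Int.floor Int.floor_zero)

lemma coeff_floorCoeff (x : QG G) (g : G) : (floorCoeff x).coeff g = ⌊x.coeff g⌋ := rfl

lemma toQ_floorCoeff_mul_one_sub_of {x : QG G}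
    (hx : ∀ g, x * (1 - of ℚ G g) ∈ (toQ G).range) (g : G) :
    toQ G (floorCoeff x) * (1 - of ℚ G g) = x * (1 - of ℚ G g) := by
  ext t
  obtain ⟨n, hn⟩ := exists_coeff_eq_coeff_add_intCast hx (t * g⁻¹) t
  rw [coeff_mul_one_sub_of, coeff_mul_one_sub_of, coeff_toQ, coeff_toQ, coeff_floorCoeff,
    coeff_floorCoeff, hn, Int.floor_add_intCast]
  push_cast
  ring

lemma exists_toQ_mul_one_sub_of_eq {S : Set G} (hS : Subgroup.closure S = ⊤) (x : QG G)
    (hx : ∀ g ∈ S, ∃ z : ZG G, toQ G z = x * (1 - of ℚ G g)) :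
    ∃ x' : ZG G, ∀ g, toQ G x' * (1 - of ℚ G g) = x * (1 - of ℚ G g) :=
  ⟨floorCoeff x, toQ_floorCoeff_mul_one_sub_of (mul_one_sub_of_mem_range_of_closure_eq_top hS hx)⟩

end MonoidAlgebra

theorem statement0_general
    (G : Type) [CommGroup G]
    (A B : Type)
    (μ : A ⊕ B → G)
    (hA : Subgroup.closure (Set.range fun a : A => μ (Sum.inl a)) = ⊤)
    (hB : Subgroup.closure (Set.range fun b : B => μ (Sum.inr b)) = ⊤) :
    (∀ α : A → QG G,
      (∀ a b, ∃ z : ZG G, toQ G z = α a * (1 - MonoidAlgebra.of ℚ G (μ (Sum.inr b)))) →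
      ∃ α' : A → ZG G, ∀ a b,
        toQ G (α' a) * (1 - MonoidAlgebra.of ℚ G (μ (Sum.inr b)))
          = α a * (1 - MonoidAlgebra.of ℚ G (μ (Sum.inr b))))
    ∧
    (∀ β : B → QG G,
      (∀ a b, ∃ z : ZG G, toQ G z = β b * (1 - MonoidAlgebra.of ℚ G (μ (Sum.inl a)))) →
      ∃ β' : B → ZG G, ∀ a b,
        toQ G (β' b) * (1 - MonoidAlgebra.of ℚ G (μ (Sum.inl a)))
          = β b * (1 - MonoidAlgebra.of ℚ G (μ (Sum.inl a)))) := by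
  constructor
  · intro α hα
    choose α' hα' using fun a ↦
      exists_toQ_mul_one_sub_of_eq hB (α a) (by rintro _ ⟨b, rfl⟩; exact hα a b)
    exact ⟨α', fun a b ↦ hα' a _⟩
  · intro β hβ
    choose β' hβ' using fun b ↦
      exists_toQ_mul_one_sub_of_eq hA (β b) (by rintro _ ⟨a, rfl⟩; exact hβ a b)
    exact ⟨β', fun a b ↦ hβ' b _⟩

/-- Lemma 2.1 (ABpure): 𝒜_ℚ ∩ M(A,B) = 𝒜 and ℬ_ℚ ∩ M(A,B) = ℬ.  If
`α : A → ℚ[G]` is such that all the products `α(a)(e − μ(b))` are integral, then they can be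
realized by some `α′ : A → ℤ[G]`; and symmetrically for `β : B → ℚ[G]`. -/
theorem statement0
    (G : Type) [CommGroup G] [Fintype G]
    (A B : Type) [Fintype A] [Fintype B]
    (μ : A ⊕ B → G)
    (hA : Subgroup.closure (Set.range fun a : A => μ (Sum.inl a)) = ⊤)
    (hB : Subgroup.closure (Set.range fun b : B => μ (Sum.inr b)) = ⊤) :
    (∀ α : A → QG G,
      (∀ a b, ∃ z : ZG G, toQ G z = α a * (1 - MonoidAlgebra.of ℚ G (μ (Sum.inr b)))) →
      ∃ α' : A → ZG G, ∀ a b,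
        toQ G (α' a) * (1 - MonoidAlgebra.of ℚ G (μ (Sum.inr b)))
          = α a * (1 - MonoidAlgebra.of ℚ G (μ (Sum.inr b))))
    ∧
    (∀ β : B → QG G,
      (∀ a b, ∃ z : ZG G, toQ G z = β b * (1 - MonoidAlgebra.of ℚ G (μ (Sum.inl a)))) →
      ∃ β' : B → ZG G, ∀ a b,
        toQ G (β' b) * (1 - MonoidAlgebra.of ℚ G (μ (Sum.inl a)))
          = β b * (1 - MonoidAlgebra.of ℚ G (μ (Sum.inl a)))) :=
  statement0_general G A B μ hA hB
end

section
/- If the finite abelian group G is cyclic, then N(A,B) is torsion free, i.e. the torsion subgroup T(N(A,B)) is trivial. -/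
/-!
Let `g` generate `G` and `σ = 1 - g`. As `G` is cyclic, the augmentation ideal of `ℤ[G]` is
`ℤ[G] σ`; it contains every `1 - μ c` and, comparing augmentations, every `w` with
`m • w ∈ 𝒜 + ℬ`. Dividing by `σ` moves the relation `m w = α y + β x` into
`ℤ[G] ⧸ Ann(σ) ≅ ℤ[G] σ`, where `m` stays a non-zero-divisor and, because `μ(A)` and `μ(B)` generate
`G`, the quotients `u a = (1 - μ a) / σ` and `v b = (1 - μ b) / σ` each generate the unit ideal.
Over any commutative ring such a relation can be divided by `m`: contracting it with
`Σ γ_a u_a = 1` and `Σ δ_b v_b = 1` gives `α_a ≡ -D u_a`, `β_b ≡ -E v_b` and `D + E ≡ 0` modulo `m`,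
where `D = Σ δ_b β_b` and `E = Σ γ_a α_a`. Multiplying back by `σ` puts `w` in `𝒜 + ℬ`.
-/

open MonoidAlgebra

variable (G : Type) [CommGroup G] (A B : Type)

/-- The subgroup 𝒜 of M(A,B) = ℤ[G] ⊗ ℤ^A ⊗ ℤ^B (identified with A → B → ℤ[G]),
consisting of the elements Σ α(a)(e − μ(b)) ⊗ a ⊗ b with α : A → ℤ[G]. -/
noncomputable def calA (μ : A ⊕ B → G) : AddSubgroup (A → B → ZG G) where
  carrier := {r | ∃ α : A → ZG G, ∀ a b, r a b = α a * (1 - MonoidAlgebra.of ℤ G (μ (Sum.inr b)))}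
  add_mem' := by
    rintro r r' ⟨α, hα⟩ ⟨α', hα'⟩
    exact ⟨α + α', fun a b => by simp [hα, hα', add_mul]⟩
  zero_mem' := ⟨0, fun a b => by simp⟩
  neg_mem' := by
    rintro r ⟨α, hα⟩
    exact ⟨-α, fun a b => by simp [hα, neg_mul]⟩

/-- The subgroup ℬ of M(A,B), consisting of the elements Σ β(b)(e − μ(a)) ⊗ a ⊗ b
with β : B → ℤ[G]. -/
noncomputable def calB (μ : A ⊕ B → G) : AddSubgroup (A → B → ZG G) where
  carrier := {r | ∃ β : B → ZG G, ∀ a b, r a b = β b * (1 - MonoidAlgebra.of ℤ G (μ (Sum.inl a)))}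
  add_mem' := by
    rintro r r' ⟨β, hβ⟩ ⟨β', hβ'⟩
    exact ⟨β + β', fun a b => by simp [hβ, hβ', add_mul]⟩
  zero_mem' := ⟨0, fun a b => by simp⟩
  neg_mem' := by
    rintro r ⟨β, hβ⟩
    exact ⟨-β, fun a b => by simp [hβ, neg_mul]⟩

section CommRing

variable {R : Type*} [CommRing R] {A B : Type*} [Fintype A] [Fintype B]

theorem exists_eq_add_of_mul_eq_add_of_span_eq_top {u : A → R} {v : B → R}
    (hu : Ideal.span (Set.range u) = ⊤) (hv : Ideal.span (Set.range v) = ⊤)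
    {m : R} (hm : IsLeftRegular m) {z : A → B → R} {α : A → R} {β : B → R}
    (h : ∀ a b, m * z a b = α a * v b + β b * u a) :
    ∃ (α' : A → R) (β' : B → R), ∀ a b, z a b = α' a * v b + β' b * u a := by
  obtain ⟨γ, hγ⟩ := Ideal.mem_span_range_iff_exists_fun.1 (hu ▸ Submodule.mem_top (x := 1))
  obtain ⟨δ, hδ⟩ := Ideal.mem_span_range_iff_exists_fun.1 (hv ▸ Submodule.mem_top (x := 1))
  set P : A → R := fun a => ∑ b, δ b * z a b
  set Q : B → R := fun b => ∑ a, γ a * z a b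
  set S : R := ∑ a, γ a * P a
  have hP : ∀ a, m * P a = α a * ∑ b, δ b * v b + (∑ b, δ b * β b) * u a := by
    intro a
    simp only [P, Finset.mul_sum, Finset.sum_mul, ← Finset.sum_add_distrib]
    exact Finset.sum_congr rfl fun b _ => by linear_combination δ b * h a b
  have hQ : ∀ b, m * Q b = β b * ∑ a, γ a * u a + (∑ a, γ a * α a) * v b := by
    intro b
    simp only [Q, Finset.mul_sum, Finset.sum_mul, ← Finset.sum_add_distrib]
    exact Finset.sum_congr rfl fun a _ => by linear_combination γ a * h a b
  have hS : m * S = ∑ a, γ a * α a + (∑ b, δ b * β b) * ∑ a, γ a * u a := by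
    simp only [S, Finset.mul_sum, ← Finset.sum_add_distrib]
    exact Finset.sum_congr rfl fun a _ => by linear_combination γ a * hP a + γ a * α a * hδ
  simp only [hγ, hδ, mul_one] at hP hQ hS
  refine ⟨fun a => P a - S * u a, Q, fun a b => hm ?_⟩
  linear_combination h a b - v b * hP a - u a * hQ b + u a * v b * hS

theorem Ideal.Quotient.mk_annihilator_eq_mk_iff {σ r s : R} :
    Ideal.Quotient.mk (R ∙ σ).annihilator r = Ideal.Quotient.mk _ s ↔ r * σ = s * σ := by
  rw [Ideal.Quotient.eq, Submodule.mem_annihilator_span_singleton, smul_eq_mul, sub_mul,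
    sub_eq_zero]

theorem span_range_mk_annihilator_eq_top {σ : R} {x u : A → R} (hu : ∀ a, u a * σ = x a)
    (hσ : σ ∈ Ideal.span (Set.range x)) :
    Ideal.span (Set.range (Ideal.Quotient.mk (R ∙ σ).annihilator ∘ u)) = ⊤ := by
  obtain ⟨γ, hγ⟩ := Ideal.mem_span_range_iff_exists_fun.1 hσ
  have hone : Ideal.Quotient.mk (R ∙ σ).annihilator (∑ a, γ a * u a) = 1 := by
    rw [← map_one (Ideal.Quotient.mk _), Ideal.Quotient.mk_annihilator_eq_mk_iff, Finset.sum_mul]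
    simpa only [one_mul, mul_assoc, hu] using hγ
  rw [Ideal.eq_top_iff_one, ← hone, map_sum]
  exact Ideal.sum_mem _ fun a _ => by
    rw [map_mul]; exact Ideal.mul_mem_left _ _ (Ideal.subset_span ⟨a, rfl⟩)

theorem IsLeftRegular.mk_annihilator {σ m : R} (hm : IsLeftRegular m) :
    IsLeftRegular (Ideal.Quotient.mk (R ∙ σ).annihilator m) := by
  intro r s hrs
  obtain ⟨r, rfl⟩ := Ideal.Quotient.mk_surjective r
  obtain ⟨s, rfl⟩ := Ideal.Quotient.mk_surjective s
  simp only [← map_mul, Ideal.Quotient.mk_annihilator_eq_mk_iff] at hrs ⊢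
  exact hm (by linear_combination hrs)

theorem exists_eq_add_of_mul_eq_add_of_mem_span {σ m : R} {x : A → R} {y : B → R}
    (hxσ : ∀ a, x a ∈ Ideal.span {σ}) (hyσ : ∀ b, y b ∈ Ideal.span {σ})
    (hσx : σ ∈ Ideal.span (Set.range x)) (hσy : σ ∈ Ideal.span (Set.range y))
    (hm : IsLeftRegular m) {w : A → B → R} (hw : ∀ a b, w a b ∈ Ideal.span {σ})
    {α : A → R} {β : B → R} (h : ∀ a b, m * w a b = α a * y b + β b * x a) :
    ∃ (α' : A → R) (β' : B → R), ∀ a b, w a b = α' a * y b + β' b * x a := by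
  choose u hu using fun a => Ideal.mem_span_singleton'.1 (hxσ a)
  choose v hv using fun b => Ideal.mem_span_singleton'.1 (hyσ b)
  choose z hz using fun a b => Ideal.mem_span_singleton'.1 (hw a b)
  set π := Ideal.Quotient.mk (R ∙ σ).annihilator
  obtain ⟨α', β', h'⟩ := exists_eq_add_of_mul_eq_add_of_span_eq_top
    (span_range_mk_annihilator_eq_top hu hσx) (span_range_mk_annihilator_eq_top hv hσy)
    hm.mk_annihilator (z := fun a b => π (z a b)) (α := π ∘ α) (β := π ∘ β) fun a b => by
      simp only [π, Function.comp_apply, ← map_mul, ← map_add,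
        Ideal.Quotient.mk_annihilator_eq_mk_iff]
      linear_combination h a b + m * hz a b - α a * hv b - β b * hu a
  choose α'' hα'' using fun a => Ideal.Quotient.mk_surjective (α' a)
  choose β'' hβ'' using fun b => Ideal.Quotient.mk_surjective (β' b)
  refine ⟨α'', β'', fun a b => ?_⟩
  have hzab : π (z a b) = π (α'' a * v b + β'' b * u a) := by
    simp only [map_add, map_mul, π, hα'', hβ'', h', Function.comp_apply]
  rw [Ideal.Quotient.mk_annihilator_eq_mk_iff] at hzab
  linear_combination hzab - hz a b + α'' a * hv b + β'' b * hu a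

end CommRing

namespace MonoidAlgebra

variable {k G : Type*} [CommRing k] [Group G]

theorem one_sub_of_mem_span_of_mem_closure {S : Set G} {h : G} (hh : h ∈ Subgroup.closure S) :
    1 - of k G h ∈ Ideal.span ((fun s => 1 - of k G s) '' S) := by
  induction hh using Subgroup.closure_induction with
  | mem s hs => exact Ideal.subset_span ⟨s, hs, rfl⟩
  | one => rw [map_one, sub_self]; exact zero_mem _
  | mul a b _ _ ha hb =>
    have : 1 - of k G (a * b) = (1 - of k G a) + of k G a * (1 - of k G b) := by
      rw [map_mul]; noncomm_ring
    rw [this]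
    exact add_mem ha (Ideal.mul_mem_left _ _ hb)
  | inv a _ ha =>
    have : 1 - of k G a⁻¹ = -of k G a⁻¹ * (1 - of k G a) := by
      rw [neg_mul, mul_sub, mul_one, ← map_mul, inv_mul_cancel, map_one, neg_sub]
    rw [this]
    exact Ideal.mul_mem_left _ _ ha

theorem sub_algebraMap_counit_mem_span {S : Set G} (hS : Subgroup.closure S = ⊤) (r : k[G]) :
    r - algebraMap k k[G] (Bialgebra.counitAlgHom k k[G] r) ∈
      Ideal.span ((fun s => 1 - of k G s) '' S) := by
  induction r using MonoidAlgebra.induction_on with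
  | of h =>
    have : Bialgebra.counitAlgHom k k[G] (of k G h) = 1 := by simp
    rw [this, map_one, ← neg_sub]
    exact neg_mem (one_sub_of_mem_span_of_mem_closure (hS ▸ Subgroup.mem_top h))
  | add r s hr hs =>
    rw [map_add, map_add, add_sub_add_comm]
    exact add_mem hr hs
  | smul c r hr =>
    rw [map_smul, smul_eq_mul, map_mul, Algebra.smul_def, ← mul_sub]
    exact Ideal.mul_mem_left _ _ hr

theorem one_sub_of_mem_span_range {ι : Type*} {x : ι → G} (hx : Subgroup.closure (Set.range x) = ⊤)
    (h : G) : 1 - of k G h ∈ Ideal.span (Set.range fun i => 1 - of k G (x i)) := by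
  rw [Set.range_comp' (fun s => 1 - of k G s)]
  exact one_sub_of_mem_span_of_mem_closure (hx ▸ Subgroup.mem_top h)

theorem mem_span_one_sub_of_of_counit_eq_zero {g : G} (hg : Subgroup.closure {g} = ⊤) {r : k[G]}
    (hr : Bialgebra.counitAlgHom k k[G] r = 0) : r ∈ Ideal.span {1 - of k G g} := by
  simpa [hr] using sub_algebraMap_counit_mem_span (k := k) hg r

end MonoidAlgebra

theorem statement4_general
    (G : Type) [CommGroup G] [IsCyclic G]
    (A B : Type) [Fintype A] [Fintype B]
    (μ : A ⊕ B → G)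
    (hA : Subgroup.closure (Set.range fun a : A => μ (Sum.inl a)) = ⊤)
    (hB : Subgroup.closure (Set.range fun b : B => μ (Sum.inr b)) = ⊤) :
    AddCommGroup.torsion ((A → B → ZG G) ⧸ (calA G A B μ ⊔ calB G A B μ)) = ⊥ := by
  obtain ⟨g, hg⟩ := isCyclic_iff_exists_zpowers_eq_top.1 ‹IsCyclic G›
  rw [Subgroup.zpowers_eq_closure] at hg
  rw [AddSubgroup.eq_bot_iff_forall]
  intro t ht
  obtain ⟨w, rfl⟩ := QuotientAddGroup.mk_surjective t
  obtain ⟨m, hm, hmw⟩ := isOfFinAddOrder_iff_nsmul_eq_zero.1 ht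
  rw [← QuotientAddGroup.mk_nsmul, QuotientAddGroup.eq_zero_iff, AddSubgroup.mem_sup] at hmw
  obtain ⟨p, ⟨α, hp⟩, q, ⟨β, hq⟩, hpq⟩ := hmw
  have h : ∀ a b, (m : ZG G) * w a b = α a * (1 - of ℤ G (μ (Sum.inr b)))
      + β b * (1 - of ℤ G (μ (Sum.inl a))) := fun a b => by
    rw [← hp, ← hq, ← nsmul_eq_mul, ← Pi.smul_apply, ← Pi.smul_apply, ← hpq]; rfl
  have hreg : IsLeftRegular (m : ZG G) := by
    have := IsAddTorsionFree.of_isTorsionFree ℤ (ZG G)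
    exact fun r s hrs => nsmul_right_injective hm.ne' (by simpa only [nsmul_eq_mul] using hrs)
  have hw : ∀ a b, w a b ∈ Ideal.span {1 - of ℤ G g} := fun a b => by
    refine mem_span_one_sub_of_of_counit_eq_zero hg ?_
    simpa [hm.ne'] using congrArg (Bialgebra.counitAlgHom ℤ (ZG G)) (h a b)
  have hσ : ∀ c : G, 1 - of ℤ G c ∈ Ideal.span {1 - of ℤ G g} := fun _ =>
    mem_span_one_sub_of_of_counit_eq_zero hg (by simp)
  obtain ⟨α', β', h'⟩ := exists_eq_add_of_mul_eq_add_of_mem_span (fun a => hσ _) (fun b => hσ _)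
    (one_sub_of_mem_span_range hA g) (one_sub_of_mem_span_range hB g) hreg hw h
  rw [QuotientAddGroup.eq_zero_iff]
  exact AddSubgroup.mem_sup.2 ⟨_, ⟨α', fun a b => rfl⟩, _, ⟨β', fun a b => rfl⟩,
    funext₂ fun a b => (h' a b).symm⟩

/-- If G is cyclic, then N(A,B) = M(A,B)/(𝒜 + ℬ) is torsion free. -/
theorem statement4
    (G : Type) [CommGroup G] [Fintype G] [IsCyclic G]
    (A B : Type) [Fintype A] [Fintype B]
    (μ : A ⊕ B → G)
    (hA : Subgroup.closure (Set.range fun a : A => μ (Sum.inl a)) = ⊤)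
    (hB : Subgroup.closure (Set.range fun b : B => μ (Sum.inr b)) = ⊤) :
    AddCommGroup.torsion ((A → B → ZG G) ⧸ (calA G A B μ ⊔ calB G A B μ)) = ⊥ :=
  statement4_general G A B μ hA hB
end

section
/- Let r_1, r_2, …, r_n ∈ ℚ[G] and suppose r_i(e − p_j) − r_j(e − p_i) ∈ ℤ[G] for all i, j = 1, 2, …, n. Then there exist u_1, u_2, …, u_n ∈ ℤ[G] such that (r_i − u_i)(e − p_j) = (r_j − u_j)(e − p_i) for all i, j = 1, 2, …, n. -/
open MonoidAlgebra Finset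

/-- "x ∈ ℤ[G]" for an element x of ℚ[G]. -/
def MemZG (G : Type) [CommGroup G] (x : QG G) : Prop := ∃ z : ZG G, toQ G z = x

/-- G = ℤ_{m₁} × ℤ_{m₂} × ⋯ × ℤ_{mₙ}, written multiplicatively. -/
abbrev Gr {n : ℕ} (m : Fin n → ℕ) : Type := (i : Fin n) → Multiplicative (ZMod (m i))

/-- pᵢ, the generator of the i-th factor of G. -/
def pgen {n : ℕ} (m : Fin n → ℕ) (i : Fin n) : Gr m :=
  Pi.mulSingle i (Multiplicative.ofAdd 1)

/-- Pᵢ = e + pᵢ + pᵢ² + ⋯ + pᵢ^{mᵢ−1} ∈ ℤ[G]. -/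
noncomputable def Pel {n : ℕ} (m : Fin n → ℕ) (i : Fin n) : ZG (Gr m) :=
  ∑ k ∈ Finset.range (m i), (MonoidAlgebra.of ℤ (Gr m) (pgen m i)) ^ k

/-- Qᵢ = ∏_{j ≠ i} Pⱼ ∈ ℤ[G]. -/
noncomputable def Qel {n : ℕ} (m : Fin n → ℕ) (i : Fin n) : ZG (Gr m) :=
  ∏ j ∈ Finset.univ.erase i, Pel m j

/-- N = Σ_{g ∈ G} g ∈ ℤ[G]. -/
noncomputable def Nel {n : ℕ} (m : Fin n → ℕ) [∀ i, NeZero (m i)] : ZG (Gr m) :=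
  ∑ g : Gr m, MonoidAlgebra.of ℤ (Gr m) g

/-!
Clear denominators: D • rᵢ = zᵢ ∈ ℤ[G] for some D ≠ 0, and the hypothesis says that the
reductions z̄ᵢ ∈ (ℤ/D)[G] form a cocycle, z̄ᵢ (e − pⱼ) = z̄ⱼ (e − pᵢ). Over any commutative ring R,
such cocycles are exactly the families t (e − pᵢ) + aᵢ Qᵢ with Qᵢ = ∏_{j ≠ i} Pⱼ; this is proved
by induction on the set of coordinates, the one-variable input being that an element killed by
e − pᵢ is Pᵢ times an element not involving pᵢ. Lifting t and the aᵢ to ℤ[G] gives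
zᵢ = t (e − pᵢ) + aᵢ Qᵢ + D wᵢ, and uᵢ = wᵢ works because Qᵢ (e − pⱼ) = 0 for j ≠ i.
-/

namespace Gr

section Defs

variable (R : Type*) [CommRing R] {n : ℕ} (m : Fin n → ℕ)

noncomputable def p (i : Fin n) : MonoidAlgebra R (Gr m) := of R (Gr m) (pgen m i)

noncomputable def X (i : Fin n) : MonoidAlgebra R (Gr m) := 1 - p R m i

noncomputable def P (i : Fin n) : MonoidAlgebra R (Gr m) := ∑ k ∈ range (m i), p R m i ^ k

def IsCocycle (S : Finset (Fin n)) (v : Fin n → MonoidAlgebra R (Gr m)) : Prop :=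
  ∀ i ∈ S, ∀ j ∈ S, v i * X R m j = v j * X R m i

/-- Sets the `i`-th coordinate to `e`. -/
def collapse (i : Fin n) : Gr m →* Gr m :=
  MonoidHom.id _ / (MonoidHom.mulSingle _ i).comp (Pi.evalMonoidHom _ i)

noncomputable def collapseRingHom (i : Fin n) :
    MonoidAlgebra R (Gr m) →+* MonoidAlgebra R (Gr m) :=
  mapDomainRingHom R (collapse m i)

variable {R m} in
def slice (i : Fin n) (f : MonoidAlgebra R (Gr m)) : MonoidAlgebra R (Gr m) :=
  ofCoeff (f.coeff.filter fun g => g i = 1)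

end Defs

variable {R : Type*} [CommRing R] {n : ℕ} {m : Fin n → ℕ}

lemma pgen_pow (i : Fin n) (k : ℕ) :
    pgen m i ^ k = Pi.mulSingle i (Multiplicative.ofAdd (k : ZMod (m i))) := by
  simp [pgen, ← Pi.mulSingle_pow, ← ofAdd_nsmul]

lemma pgen_pow_card (i : Fin n) : pgen m i ^ m i = 1 := by
  simp [pgen_pow]

lemma p_pow (i : Fin n) (k : ℕ) : p R m i ^ k = single (pgen m i ^ k) 1 := by
  rw [p, ← map_pow, of_apply]

lemma X_mul_P (i : Fin n) : X R m i * P R m i = 0 := by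
  rw [X, P, mul_neg_geom_sum, p_pow, pgen_pow_card, ← one_def, sub_self]

lemma collapse_apply (i : Fin n) (g : Gr m) (j : Fin n) :
    collapse m i g j = if j = i then 1 else g j := by
  by_cases h : j = i
  · subst h; simp [collapse]
  · simp [collapse, h]

lemma collapse_pgen_self (i : Fin n) : collapse m i (pgen m i) = 1 := by
  ext j; by_cases h : j = i <;> simp [collapse_apply, pgen, h]

lemma collapse_pgen_of_ne {i j : Fin n} (h : j ≠ i) : collapse m i (pgen m j) = pgen m j := by
  ext k; by_cases hk : k = i
  · subst hk; simp [collapse_apply, pgen, Ne.symm h]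
  · simp [collapse_apply, hk]

lemma collapseRingHom_X_self (i : Fin n) : collapseRingHom R m i (X R m i) = 0 := by
  rw [X, map_sub, map_one, sub_eq_zero]
  simp [p, collapseRingHom, collapse_pgen_self, one_def]

lemma collapseRingHom_X_of_ne {i j : Fin n} (h : j ≠ i) :
    collapseRingHom R m i (X R m j) = X R m j := by
  rw [X, map_sub, map_one]
  simp [p, collapseRingHom, collapse_pgen_of_ne h]

lemma collapse_comp_self (i : Fin n) : (collapse m i).comp (collapse m i) = collapse m i := by
  refine MonoidHom.ext fun g => funext fun j => ?_
  simp only [MonoidHom.comp_apply, collapse_apply]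
  split_ifs <;> rfl

lemma collapseRingHom_idem (i : Fin n) (f : MonoidAlgebra R (Gr m)) :
    collapseRingHom R m i (collapseRingHom R m i f) = collapseRingHom R m i f := by
  rw [collapseRingHom, ← RingHom.comp_apply, ← mapDomainRingHom_comp, collapse_comp_self]

lemma collapseRingHom_eq_self_iff (i : Fin n) (c : MonoidAlgebra R (Gr m)) :
    collapseRingHom R m i c = c ↔ ∀ g, c.coeff g ≠ 0 → g i = 1 := by
  constructor
  · intro hc g hg
    by_contra hgi
    apply hg
    rw [← hc, collapseRingHom, mapDomainRingHom_apply, coeff_mapDomain]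
    refine Finsupp.mapDomain_of_notMem_range _ _ ?_
    rintro ⟨h, rfl⟩
    simp [collapse_apply] at hgi
  · intro hc
    ext1
    rw [collapseRingHom, mapDomainRingHom_apply, coeff_mapDomain]
    conv_rhs => rw [← Finsupp.mapDomain_id (v := c.coeff)]
    refine Finsupp.mapDomain_congr fun g hg => ?_
    ext j
    have := hc g (Finsupp.mem_support_iff.mp hg)
    by_cases h : j = i
    · subst h; simp [collapse_apply, this]
    · simp [collapse_apply, h]

lemma collapseRingHom_slice (i : Fin n) (f : MonoidAlgebra R (Gr m)) :
    collapseRingHom R m i (slice i f) = slice i f := by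
  rw [collapseRingHom_eq_self_iff]
  intro g hg
  by_contra h
  simp [slice, h] at hg

lemma isCocycle_coboundary_add (S : Finset (Fin n)) (t : MonoidAlgebra R (Gr m))
    (a : Fin n → MonoidAlgebra R (Gr m)) :
    IsCocycle R m S fun i => t * X R m i + a i * ∏ j ∈ S.erase i, P R m j := by
  intro i hi j hj
  rcases eq_or_ne i j with rfl | hij
  · rfl
  have hP : ∀ {i j}, j ≠ i → j ∈ S → (∏ k ∈ S.erase i, P R m k) * X R m j = 0 := fun hji hj => by
    rw [← mul_prod_erase _ _ (mem_erase.mpr ⟨hji, hj⟩), mul_comm, ← mul_assoc, X_mul_P, zero_mul]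
  linear_combination a i * hP hij.symm hj - a j * hP hij hi

section Map

variable {S : Type*} [CommRing S] (φ : R →+* S)

lemma mapRingHom_X (i : Fin n) : mapRingHom (Gr m) φ (X R m i) = X S m i := by
  simp [X, p, of_apply]

lemma mapRingHom_P (i : Fin n) : mapRingHom (Gr m) φ (P R m i) = P S m i := by
  simp [P, p, of_apply]

lemma IsCocycle.map {T : Finset (Fin n)} {v : Fin n → MonoidAlgebra R (Gr m)}
    (hv : IsCocycle R m T v) : IsCocycle S m T fun i => mapRingHom (Gr m) φ (v i) :=
  fun i hi j hj => by rw [← mapRingHom_X φ, ← mapRingHom_X φ, ← map_mul, ← map_mul, hv i hi j hj]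

end Map

lemma IsCocycle.of_smul {K : Type*} [Field K] {T : Finset (Fin n)}
    {v : Fin n → MonoidAlgebra K (Gr m)} {c : K} (hc : c ≠ 0)
    (hv : IsCocycle K m T fun i => c • v i) : IsCocycle K m T v :=
  fun i hi j hj => smul_right_injective _ hc <| by
    simpa only [smul_mul_assoc] using hv i hi j hj

variable [∀ i, NeZero (m i)]

lemma collapse_mul_pgen_pow (i : Fin n) (g : Gr m) :
    collapse m i g * pgen m i ^ (Multiplicative.toAdd (g i)).val = g := by
  ext j; by_cases h : j = i
  · subst h; simp [collapse_apply, pgen_pow]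
  · simp [collapse_apply, pgen_pow, h]

lemma X_dvd_sub_collapseRingHom (i : Fin n) (f : MonoidAlgebra R (Gr m)) :
    X R m i ∣ f - collapseRingHom R m i f := by
  induction f using MonoidAlgebra.induction_linear with
  | zero => simp
  | add f g hf hg => simpa [add_sub_add_comm] using dvd_add hf hg
  | single g r =>
    set k := (Multiplicative.toAdd (g i)).val
    have hg : single g r = single (collapse m i g) r * p R m i ^ k := by
      rw [p_pow, single_mul_single, mul_one, collapse_mul_pgen_pow]
    have hdvd : X R m i ∣ p R m i ^ k - 1 := by
      simpa [X] using (sub_dvd_pow_sub_pow (1 : MonoidAlgebra R (Gr m)) (p R m i) k).neg_right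
    have hcol : collapseRingHom R m i (single g r) = single (collapse m i g) r := by
      simp [collapseRingHom]
    rw [hcol, hg, ← mul_sub_one]
    exact dvd_mul_of_dvd_right hdvd _

lemma coeff_P_mul_of_collapseRingHom_eq_self {i : Fin n} {c : MonoidAlgebra R (Gr m)}
    (hc : collapseRingHom R m i c = c) {g : Gr m} (hg : g i = 1) :
    (P R m i * c).coeff g = c.coeff g := by
  rw [P, Finset.sum_mul, coeff_sum, Finset.sum_apply',
    Finset.sum_eq_single_of_mem 0 (mem_range.mpr (NeZero.pos _))]
  · simp
  · intro k hk hk0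
    rw [p_pow, coeff_single_mul_apply, one_mul]
    by_contra hne
    have := (collapseRingHom_eq_self_iff i c).mp hc _ hne
    simp only [Pi.mul_apply, Pi.inv_apply, pgen_pow, Pi.mulSingle_eq_same, hg, mul_one,
      inv_eq_one, ofAdd_eq_one, ZMod.natCast_eq_zero_iff] at this
    exact hk0 (Nat.eq_zero_of_dvd_of_lt this (mem_range.mp hk))

lemma eq_zero_of_P_mul_eq_zero {i : Fin n} {c : MonoidAlgebra R (Gr m)}
    (hc : collapseRingHom R m i c = c) (hPc : P R m i * c = 0) : c = 0 := by
  ext1; ext g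
  by_cases hg : g i = 1
  · rw [← coeff_P_mul_of_collapseRingHom_eq_self hc hg, hPc]
  · by_contra hne
    exact hg ((collapseRingHom_eq_self_iff i c).mp hc g hne)

lemma eq_zero_of_mul_X_eq_zero {i : Fin n} {f : MonoidAlgebra R (Gr m)} (hf : f * X R m i = 0)
    (hf₁ : ∀ g : Gr m, g i = 1 → f.coeff g = 0) : f = 0 := by
  have hp₁ : f * p R m i = f := by
    rw [X, mul_sub, mul_one, sub_eq_zero] at hf; exact hf.symm
  have hp : ∀ k, f * p R m i ^ k = f := by
    intro k
    induction k with
    | zero => rw [pow_zero, mul_one]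
    | succ k ih => rw [pow_succ, ← mul_assoc, ih, hp₁]
  ext1; ext g
  rw [← hp (Multiplicative.toAdd (g i)).val, p_pow, coeff_mul_single_apply, mul_one]
  apply hf₁
  rw [← eq_mul_inv_of_mul_eq (collapse_mul_pgen_pow i g), collapse_apply, if_pos rfl]

lemma eq_P_mul_slice_of_mul_X_eq_zero {i : Fin n} {f : MonoidAlgebra R (Gr m)}
    (hf : f * X R m i = 0) : f = P R m i * slice i f := by
  rw [← sub_eq_zero]
  have hX : (f - P R m i * slice i f) * X R m i = 0 := by
    linear_combination hf - slice i f * X_mul_P (R := R) (m := m) i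
  refine eq_zero_of_mul_X_eq_zero hX fun g hg => ?_
  rw [coeff_sub, Finsupp.sub_apply,
    coeff_P_mul_of_collapseRingHom_eq_self (collapseRingHom_slice i f) hg]
  simp [slice, hg]

lemma exists_eq_prod_P_mul (S : Finset (Fin n)) {f : MonoidAlgebra R (Gr m)}
    (hf : ∀ i ∈ S, f * X R m i = 0) : ∃ a, f = (∏ j ∈ S, P R m j) * a := by
  classical
  induction S using Finset.induction generalizing f with
  | empty => exact ⟨f, by rw [prod_empty, one_mul]⟩
  | insert i₀ S hi₀ ih =>
    have hf₀ := eq_P_mul_slice_of_mul_X_eq_zero (hf i₀ (mem_insert_self i₀ S))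
    have hc : ∀ i ∈ S, slice i₀ f * X R m i = 0 := fun i hi =>
      eq_zero_of_P_mul_eq_zero
        (by rw [map_mul, collapseRingHom_slice,
          collapseRingHom_X_of_ne (ne_of_mem_of_not_mem hi hi₀)])
        (by rw [← mul_assoc, ← hf₀]; exact hf i (mem_insert_of_mem hi))
    obtain ⟨a, ha⟩ := ih hc
    exact ⟨a, by rw [hf₀, ha, prod_insert hi₀, mul_assoc]⟩

lemma IsCocycle.exists_decomp_insert {i₀ : Fin n} {S : Finset (Fin n)} (hi₀ : i₀ ∉ S)
    {v : Fin n → MonoidAlgebra R (Gr m)} (hv : IsCocycle R m (insert i₀ S) v) :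
    ∃ (w b : MonoidAlgebra R (Gr m)) (c : Fin n → MonoidAlgebra R (Gr m)),
      IsCocycle R m S c ∧ (∀ i ∈ S, b * X R m i = 0) ∧ v i₀ = w * X R m i₀ + b ∧
        ∀ i ∈ S, v i = w * X R m i + P R m i₀ * c i := by
  set ε := collapseRingHom R m i₀
  obtain ⟨w, hw⟩ := X_dvd_sub_collapseRingHom i₀ (v i₀)
  set b := ε (v i₀)
  have hv₀ : v i₀ = w * X R m i₀ + b := by linear_combination hw
  have hrel : ∀ i ∈ S, (v i - w * X R m i) * X R m i₀ = b * X R m i := fun i hi => by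
    linear_combination hv i (mem_insert_of_mem hi) i₀ (mem_insert_self i₀ S) + X R m i * hv₀
  -- `ε` kills `X i₀` but fixes `b * X i`, so both sides of `hrel` vanish.
  have hker : ∀ i ∈ S, (v i - w * X R m i) * X R m i₀ = 0 := fun i hi => by
    have hne := ne_of_mem_of_not_mem hi hi₀
    have hfix : ε ((v i - w * X R m i) * X R m i₀) = (v i - w * X R m i) * X R m i₀ := by
      rw [hrel i hi, map_mul, collapseRingHom_idem, collapseRingHom_X_of_ne hne]
    rw [← hfix, map_mul, collapseRingHom_X_self, mul_zero]
  set c := fun i => slice i₀ (v i - w * X R m i)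
  have hvc : ∀ i ∈ S, v i = w * X R m i + P R m i₀ * c i := fun i hi => by
    linear_combination eq_P_mul_slice_of_mul_X_eq_zero (hker i hi)
  refine ⟨w, b, c, fun i hi j hj => ?_, fun i hi => by rw [← hrel i hi, hker i hi], hv₀, hvc⟩
  rw [← sub_eq_zero]
  refine eq_zero_of_P_mul_eq_zero (i := i₀) ?_ ?_
  · rw [map_sub, map_mul, map_mul, collapseRingHom_slice, collapseRingHom_slice,
      collapseRingHom_X_of_ne (ne_of_mem_of_not_mem hi hi₀),
      collapseRingHom_X_of_ne (ne_of_mem_of_not_mem hj hi₀)]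
  · linear_combination hv i (mem_insert_of_mem hi) j (mem_insert_of_mem hj)
      - X R m j * hvc i hi + X R m i * hvc j hj

lemma IsCocycle.exists_eq_coboundary_add (S : Finset (Fin n))
    {v : Fin n → MonoidAlgebra R (Gr m)} (hv : IsCocycle R m S v) :
    ∃ (t : MonoidAlgebra R (Gr m)) (a : Fin n → MonoidAlgebra R (Gr m)),
      ∀ i ∈ S, v i = t * X R m i + a i * ∏ j ∈ S.erase i, P R m j := by
  classical
  induction S using Finset.induction generalizing v with
  | empty => exact ⟨0, 0, fun i hi => absurd hi (notMem_empty i)⟩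
  | insert i₀ S hi₀ ih =>
    obtain ⟨w, b, c, hc, hb, hv₀, hvS⟩ := hv.exists_decomp_insert hi₀
    obtain ⟨t, a, hca⟩ := ih hc
    obtain ⟨a₀, hba⟩ := exists_eq_prod_P_mul S hb
    refine ⟨w + P R m i₀ * t, Function.update a i₀ a₀, fun i hi => ?_⟩
    rcases mem_insert.mp hi with rfl | hi
    · rw [Function.update_self, erase_insert hi₀, hv₀, hba]
      linear_combination -t * X_mul_P (R := R) (m := m) i
    · have hne := ne_of_mem_of_not_mem hi hi₀
      rw [Function.update_of_ne hne, erase_insert_of_ne hne.symm,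
        prod_insert fun h => hi₀ (mem_of_mem_erase h), hvS i hi, hca i hi]
      ring

end Gr

section IntegralGroupRing

variable {G : Type} [CommGroup G]

lemma toQ_apply (z : ZG G) : toQ G z = mapRingHom G (Int.castRingHom ℚ) z := by
  induction z using MonoidAlgebra.induction_linear with
  | zero => simp
  | add x y hx hy => rw [map_add, map_add, hx, hy]
  | single g r =>
    rw [← mul_one r, ← smul_eq_mul, ← smul_single, map_zsmul, map_zsmul]
    simp [toQ]

lemma toQ_injective : Function.Injective (toQ G) := by
  intro x y hxy
  rw [toQ_apply, toQ_apply, coe_mapRingHom] at hxy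
  exact map_injective _ Int.cast_injective hxy

lemma MemZG.nsmul {x : QG G} (hx : MemZG G x) (k : ℕ) : MemZG G ((k : ℚ) • x) := by
  obtain ⟨z, rfl⟩ := hx
  exact ⟨k • z, by rw [map_nsmul, Nat.cast_smul_eq_nsmul]⟩

lemma exists_nat_smul_memZG (x : QG G) : ∃ D : ℕ, D ≠ 0 ∧ MemZG G ((D : ℚ) • x) := by
  induction x using MonoidAlgebra.induction_linear with
  | zero => exact ⟨1, one_ne_zero, 0, by simp⟩
  | add x y hx hy =>
    obtain ⟨D, hD, hxD⟩ := hx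
    obtain ⟨E, hE, hyE⟩ := hy
    obtain ⟨z, hz⟩ := hxD.nsmul E
    obtain ⟨w, hw⟩ := hyE.nsmul D
    refine ⟨D * E, mul_ne_zero hD hE, z + w, ?_⟩
    rw [map_add, hz, hw, smul_smul, smul_smul, smul_add]
    push_cast; ring_nf
  | single g q =>
    refine ⟨q.den, q.den_nz, single g q.num, ?_⟩
    simp [toQ_apply, smul_single, Rat.den_mul_eq_num]

lemma exists_nat_smul_memZG_pi {ι : Type*} [Fintype ι] (x : ι → QG G) :
    ∃ D : ℕ, D ≠ 0 ∧ ∀ i, MemZG G ((D : ℚ) • x i) := by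
  classical
  choose D hD hx using fun i => exists_nat_smul_memZG (x i)
  refine ⟨∏ i, D i, prod_ne_zero_iff.mpr fun i _ => hD i, fun i => ?_⟩
  rw [← mul_prod_erase _ _ (mem_univ i), mul_comm, Nat.cast_mul, mul_smul]
  exact (hx i).nsmul _

lemma mapRingHom_intCast_eq_zero_iff (D : ℕ) (z : ZG G) :
    mapRingHom G (Int.castRingHom (ZMod D)) z = 0 ↔ ∃ y : ZG G, z = (D : ℤ) • y := by
  constructor
  · intro hz
    have hdvd : ∀ g, (D : ℤ) ∣ z.coeff g := fun g => by
      rw [← ZMod.intCast_zmod_eq_zero_iff_dvd]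
      simpa using congr(($hz).coeff g)
    refine ⟨ofCoeff (z.coeff.mapRange (· / (D : ℤ)) (Int.zero_ediv _)), ?_⟩
    ext g
    simp only [coeff_smul, Finsupp.smul_apply, Finsupp.mapRange_apply, smul_eq_mul]
    exact (Int.mul_ediv_cancel' (hdvd g)).symm
  · rintro ⟨y, rfl⟩
    rw [map_zsmul, natCast_zsmul, ← Nat.cast_smul_eq_nsmul (ZMod D), ZMod.natCast_self, zero_smul]

end IntegralGroupRing

namespace Gr

variable {n : ℕ} {m : Fin n → ℕ}

lemma isCocycle_reduction_of_memZG (D : ℕ) {r : Fin n → QG (Gr m)} {z : Fin n → ZG (Gr m)}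
    (hz : ∀ i, toQ (Gr m) (z i) = (D : ℚ) • r i)
    (h : ∀ i j, MemZG (Gr m) (r i * X ℚ m j - r j * X ℚ m i)) :
    IsCocycle (ZMod D) m univ fun i => mapRingHom (Gr m) (Int.castRingHom (ZMod D)) (z i) := by
  intro i _ j _
  obtain ⟨y, hy⟩ := h i j
  have hzy : z i * X ℤ m j - z j * X ℤ m i = (D : ℤ) • y := toQ_injective <| by
    simp only [map_sub, map_mul, map_zsmul, toQ_apply, mapRingHom_X] at hz hy ⊢
    rw [hz, hz, hy, smul_sub, smul_mul_assoc, smul_mul_assoc]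
    simp only [Nat.cast_smul_eq_nsmul]
  rw [← sub_eq_zero, ← mapRingHom_X (Int.castRingHom (ZMod D)),
    ← mapRingHom_X (Int.castRingHom (ZMod D)), ← map_mul, ← map_mul, ← map_sub]
  exact (mapRingHom_intCast_eq_zero_iff D _).mpr ⟨y, hzy⟩

variable [∀ i, NeZero (m i)]

lemma exists_isCocycle_sub_smul (D : ℕ) {z : Fin n → ZG (Gr m)}
    (hz : IsCocycle (ZMod D) m univ fun i => mapRingHom (Gr m) (Int.castRingHom (ZMod D)) (z i)) :
    ∃ w : Fin n → ZG (Gr m), IsCocycle ℤ m univ fun i => z i - (D : ℤ) • w i := by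
  set ρ := mapRingHom (Gr m) (Int.castRingHom (ZMod D))
  have hρ : Function.Surjective ρ := by
    rw [coe_mapRingHom]; exact map_surjective _ (ZMod.intCast_surjective (n := D))
  obtain ⟨t', a', hta'⟩ := hz.exists_eq_coboundary_add univ
  obtain ⟨t, rfl⟩ := hρ t'
  choose a ha using fun i => hρ (a' i)
  have hker : ∀ i, ∃ w, z i - (t * X ℤ m i + a i * ∏ j ∈ univ.erase i, P ℤ m j) = (D : ℤ) • w :=
    fun i => (mapRingHom_intCast_eq_zero_iff D _).mp <| by
      simp only [map_sub, map_add, map_mul, map_prod, ρ, mapRingHom_X, mapRingHom_P, ha]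
      rw [hta' i (mem_univ i), sub_self]
  choose w hw using hker
  refine ⟨w, ?_⟩
  convert isCocycle_coboundary_add univ t a using 2 with i
  rw [← hw i, sub_sub_cancel]

end Gr

open Gr

theorem statement7_general
    (n : ℕ) (m : Fin n → ℕ) [∀ i, NeZero (m i)]
    (r : Fin n → QG (Gr m))
    (h : ∀ i j, MemZG (Gr m)
      (r i * (1 - MonoidAlgebra.of ℚ (Gr m) (pgen m j))
        - r j * (1 - MonoidAlgebra.of ℚ (Gr m) (pgen m i)))) :
    ∃ u : Fin n → ZG (Gr m), ∀ i j,
      (r i - toQ (Gr m) (u i)) * (1 - MonoidAlgebra.of ℚ (Gr m) (pgen m j))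
        = (r j - toQ (Gr m) (u j)) * (1 - MonoidAlgebra.of ℚ (Gr m) (pgen m i)) := by
  replace h : ∀ i j, MemZG (Gr m) (r i * X ℚ m j - r j * X ℚ m i) := h
  show ∃ u : Fin n → ZG (Gr m), ∀ i j,
    (r i - toQ (Gr m) (u i)) * X ℚ m j = (r j - toQ (Gr m) (u j)) * X ℚ m i
  obtain ⟨D, hD, hDr⟩ := exists_nat_smul_memZG_pi r
  choose z hz using hDr
  obtain ⟨w, hw⟩ := exists_isCocycle_sub_smul D (isCocycle_reduction_of_memZG D hz h)
  have hQ : IsCocycle ℚ m univ fun i => (D : ℚ) • (r i - toQ (Gr m) (w i)) := by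
    convert hw.map (Int.castRingHom ℚ) using 2 with i
    rw [map_sub, ← toQ_apply, ← toQ_apply, hz, map_zsmul, smul_sub]
    simp only [Nat.cast_smul_eq_nsmul]
  exact ⟨w, fun i j => hQ.of_smul (Nat.cast_ne_zero.mpr hD) i (mem_univ i) j (mem_univ j)⟩

/-- Lemma 2.4 (adjust): if r₁, …, rₙ ∈ ℚ[G] satisfy
rᵢ(e − pⱼ) − rⱼ(e − pᵢ) ∈ ℤ[G] for all i, j, then there exist u₁, …, uₙ ∈ ℤ[G] with
(rᵢ − uᵢ)(e − pⱼ) = (rⱼ − uⱼ)(e − pᵢ) for all i, j. -/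
theorem statement7
    (n : ℕ) (hn : 1 ≤ n) (m : Fin n → ℕ) [∀ i, NeZero (m i)]
    (r : Fin n → QG (Gr m))
    (h : ∀ i j, MemZG (Gr m)
      (r i * (1 - MonoidAlgebra.of ℚ (Gr m) (pgen m j))
        - r j * (1 - MonoidAlgebra.of ℚ (Gr m) (pgen m i)))) :
    ∃ u : Fin n → ZG (Gr m), ∀ i j,
      (r i - toQ (Gr m) (u i)) * (1 - MonoidAlgebra.of ℚ (Gr m) (pgen m j))
        = (r j - toQ (Gr m) (u j)) * (1 - MonoidAlgebra.of ℚ (Gr m) (pgen m i)) :=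
  statement7_general n m r h
end

section
/- Suppose α, β, α′, β′ : {p_1, …, p_n} → ℚ[G] satisfy α(p_i)(e − p_j) + β(p_j)(e − p_i) = α′(p_i)(e − p_j) + β′(p_j)(e − p_i) for all i, j = 1, 2, …, n. Then (α(p_i) + β(p_i))(e − p_j) = (α′(p_i) + β′(p_i))(e − p_j) for all i, j = 1, 2, …, n. In other words, for an element r of 𝒜_ℚ + ℬ_ℚ, the quantity κ_{i,j}(r) = (α(p_i) + β(p_i))(e − p_j) does not depend on the choice of the representation r(a,b) = α(a)(e − b) + β(b)(e − a). -/
/-!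
Put `cᵢ = (αᵢ + βᵢ) - (α'ᵢ + β'ᵢ)`. Adding the hypothesis for `(i, j)` and for `(j, i)` gives
`cᵢ (e - pⱼ) = -cⱼ (e - pᵢ)`, and the case `i = j` gives `cᵢ (e - pᵢ) = 0`, so `cᵢ` is fixed by `pᵢ`
and `Pᵢ cᵢ = mᵢ cᵢ`. Multiplying the first relation by `Pᵢ`, which kills `e - pᵢ`, yields
`mᵢ cᵢ (e - pⱼ) = 0`, and `mᵢ` is invertible in `ℚ[G]`.
-/

open MonoidAlgebra Finset

lemma pgen_pow_card {n : ℕ} (m : Fin n → ℕ) (i : Fin n) : pgen m i ^ m i = 1 := by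
  rw [pgen, ← Pi.mulSingle_pow, ← ofAdd_nsmul, nsmul_one, ZMod.natCast_self, ofAdd_zero,
    Pi.mulSingle_one]

section CommRing

variable {R : Type*} [CommRing R]

lemma pow_mul_eq_self_of_mul_one_sub_eq_zero {g x : R} (hx : x * (1 - g) = 0) (k : ℕ) :
    g ^ k * x = x := by
  have hgx : g * x = x := by linear_combination -hx
  induction k with
  | zero => rw [pow_zero, one_mul]
  | succ k ih => rw [pow_succ, mul_assoc, hgx, ih]

lemma geom_sum_mul_of_mul_one_sub_eq_zero {g x : R} (hx : x * (1 - g) = 0) (m : ℕ) :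
    (∑ k ∈ range m, g ^ k) * x = m * x := by
  simp only [sum_mul, pow_mul_eq_self_of_mul_one_sub_eq_zero hx, sum_const, card_range,
    nsmul_eq_mul]

lemma geom_sum_mul_one_sub_of_pow_eq_one {g : R} {m : ℕ} (hg : g ^ m = 1) :
    (∑ k ∈ range m, g ^ k) * (1 - g) = 0 := by
  rw [← neg_sub, mul_neg, geom_sum_mul, hg, sub_self, neg_zero]

lemma mul_one_sub_eq_zero_of_eq_neg {g h x y : R} {m : ℕ} (hg : g ^ m = 1)
    (hm : IsUnit (m : R)) (hx : x * (1 - g) = 0) (hxy : x * (1 - h) = -(y * (1 - g))) :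
    x * (1 - h) = 0 := by
  refine hm.mul_right_eq_zero.mp ?_
  calc (m : R) * (x * (1 - h))
      = (∑ k ∈ range m, g ^ k) * x * (1 - h) := by
        rw [geom_sum_mul_of_mul_one_sub_eq_zero hx, mul_assoc]
    _ = -(y * ((∑ k ∈ range m, g ^ k) * (1 - g))) := by rw [mul_assoc, hxy]; ring
    _ = 0 := by rw [geom_sum_mul_one_sub_of_pow_eq_one hg, mul_zero, neg_zero]

lemma add_mul_one_sub_eq_zero {ι : Type*} {a b p : ι → R} {m : ι → ℕ}
    (hp : ∀ i, p i ^ m i = 1) (hm : ∀ i, IsUnit (m i : R))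
    (h : ∀ i j, a i * (1 - p j) + b j * (1 - p i) = 0) (i j : ι) :
    (a i + b i) * (1 - p j) = 0 :=
  mul_one_sub_eq_zero_of_eq_neg (hp i) (hm i) (by linear_combination h i i)
    (y := a j + b j) (by linear_combination h i j + h j i)

end CommRing

theorem statement8_general
    (n : ℕ) (m : Fin n → ℕ) [∀ i, NeZero (m i)]
    (α β α' β' : Fin n → QG (Gr m))
    (h : ∀ i j,
      α i * (1 - MonoidAlgebra.of ℚ (Gr m) (pgen m j))
          + β j * (1 - MonoidAlgebra.of ℚ (Gr m) (pgen m i))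
        = α' i * (1 - MonoidAlgebra.of ℚ (Gr m) (pgen m j))
          + β' j * (1 - MonoidAlgebra.of ℚ (Gr m) (pgen m i))) :
    ∀ i j,
      (α i + β i) * (1 - MonoidAlgebra.of ℚ (Gr m) (pgen m j))
        = (α' i + β' i) * (1 - MonoidAlgebra.of ℚ (Gr m) (pgen m j)) := by
  intro i j
  have hp (k : Fin n) : MonoidAlgebra.of ℚ (Gr m) (pgen m k) ^ m k = 1 := by
    rw [← map_pow, pgen_pow_card, map_one]
  have hm (k : Fin n) : IsUnit (m k : QG (Gr m)) := by
    rw [← map_natCast (algebraMap ℚ (QG (Gr m)))]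
    exact (Ne.isUnit (Nat.cast_ne_zero.mpr (NeZero.ne (m k)))).map _
  have hc := add_mul_one_sub_eq_zero hp hm (a := α - α') (b := β - β')
    (fun i j => by simp only [Pi.sub_apply]; linear_combination h i j) i j
  simp only [Pi.sub_apply] at hc
  linear_combination hc

/-- Well-definedness of κ_{i,j}: if α, β and α′, β′ are two representations of the same
element of 𝒜_ℚ + ℬ_ℚ, i.e. α(pᵢ)(e − pⱼ) + β(pⱼ)(e − pᵢ) = α′(pᵢ)(e − pⱼ) + β′(pⱼ)(e − pᵢ)
for all i, j, then (α(pᵢ) + β(pᵢ))(e − pⱼ) = (α′(pᵢ) + β′(pᵢ))(e − pⱼ) for all i, j. -/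
theorem statement8
    (n : ℕ) (hn : 1 ≤ n) (m : Fin n → ℕ) [∀ i, NeZero (m i)]
    (α β α' β' : Fin n → QG (Gr m))
    (h : ∀ i j,
      α i * (1 - MonoidAlgebra.of ℚ (Gr m) (pgen m j))
          + β j * (1 - MonoidAlgebra.of ℚ (Gr m) (pgen m i))
        = α' i * (1 - MonoidAlgebra.of ℚ (Gr m) (pgen m j))
          + β' j * (1 - MonoidAlgebra.of ℚ (Gr m) (pgen m i))) :
    ∀ i j,
      (α i + β i) * (1 - MonoidAlgebra.of ℚ (Gr m) (pgen m j))
        = (α' i + β' i) * (1 - MonoidAlgebra.of ℚ (Gr m) (pgen m j)) :=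
  statement8_general n m α β α' β' h
end

section
/- Fix points x₀ ∈ X and y₀ ∈ Y, and let D′ ⊆ C(Z,ℤ) be the subgroup of all elements f₁ − f₁∘φ̃⁻¹ + f₂ − f₂∘ψ̃⁻¹ with f₁, f₂ ∈ C(Z,ℤ) satisfying f₁(x₀,y,g) = 0 and f₂(x,y₀,g) = 0 for all x ∈ X, y ∈ Y, g ∈ G. Then the quotient group C(Z,ℤ)/D′ is torsion free. -/
/-- X is a Cantor set: nonempty, compact, metrizable, totally disconnected, and
without isolated points. -/
def IsCantor (X : Type*) [TopologicalSpace X] : Prop :=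
  Nonempty X ∧ CompactSpace X ∧ TopologicalSpace.MetrizableSpace X ∧
    TotallyDisconnectedSpace X ∧ Perfect (Set.univ : Set X)

/-- A homeomorphism is minimal if every (two-sided) orbit is dense. -/
def IsMinimalHomeo {X : Type*} [TopologicalSpace X] (φ : X ≃ₜ X) : Prop :=
  ∀ x : X, Dense (Set.range fun k : ℤ => (φ.toEquiv ^ k) x)

variable {X Y G : Type*} [TopologicalSpace X] [TopologicalSpace Y]
  [TopologicalSpace G] [CommGroup G] [IsTopologicalGroup G]

/-- The skew product homeomorphism φ×ξ of X × G, (φ×ξ)(x,g) = (φ(x), gξ(x)).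
A cocycle ξ is non-degenerate when this homeomorphism is minimal. -/
def skewProd (φ : X ≃ₜ X) (ξ : C(X, G)) : (X × G) ≃ₜ (X × G) where
  toFun z := (φ z.1, z.2 * ξ z.1)
  invFun z := (φ.symm z.1, z.2 * (ξ (φ.symm z.1))⁻¹)
  left_inv z := by simp
  right_inv z := by simp
  continuous_toFun := by fun_prop
  continuous_invFun := by fun_prop

/-- The homeomorphism φ̃(x,y,g) = (φ(x), y, gξ(x)) of Z = X × Y × G. -/
def phiTilde (φ : X ≃ₜ X) (ξ : C(X, G)) : (X × Y × G) ≃ₜ (X × Y × G) where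
  toFun z := (φ z.1, z.2.1, z.2.2 * ξ z.1)
  invFun z := (φ.symm z.1, z.2.1, z.2.2 * (ξ (φ.symm z.1))⁻¹)
  left_inv z := by simp
  right_inv z := by simp
  continuous_toFun := by fun_prop
  continuous_invFun := by fun_prop

/-- The homeomorphism ψ̃(x,y,g) = (x, ψ(y), gη(y)) of Z = X × Y × G. -/
def psiTilde (ψ : Y ≃ₜ Y) (η : C(Y, G)) : (X × Y × G) ≃ₜ (X × Y × G) where
  toFun z := (z.1, ψ z.2.1, z.2.2 * η z.2.1)
  invFun z := (z.1, ψ.symm z.2.1, z.2.2 * (η (ψ.symm z.2.1))⁻¹)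
  left_inv z := by simp
  right_inv z := by simp
  continuous_toFun := by fun_prop
  continuous_invFun := by fun_prop

/-- The subgroup D′ of C(Z,ℤ): elements f₁ − f₁∘φ̃⁻¹ + f₂ − f₂∘ψ̃⁻¹ with
f₁(x₀,y,g) = 0 and f₂(x,y₀,g) = 0 for all x, y, g. -/
def Dprime (φ : X ≃ₜ X) (ψ : Y ≃ₜ Y) (ξ : C(X, G)) (η : C(Y, G)) (x₀ : X) (y₀ : Y) :
    AddSubgroup C(X × Y × G, ℤ) where
  carrier := {h | ∃ f₁ f₂ : C(X × Y × G, ℤ),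
    (∀ (y : Y) (g : G), f₁ (x₀, y, g) = 0) ∧
    (∀ (x : X) (g : G), f₂ (x, y₀, g) = 0) ∧
    h = f₁ - f₁.comp ((phiTilde (Y := Y) φ ξ).symm : C(X × Y × G, X × Y × G))
        + (f₂ - f₂.comp ((psiTilde (X := X) ψ η).symm : C(X × Y × G, X × Y × G)))}
  zero_mem' := ⟨0, 0, by simp, by simp, by simp⟩
  add_mem' := by
    rintro h h' ⟨f₁, f₂, h1, h2, rfl⟩ ⟨g₁, g₂, k1, k2, rfl⟩
    refine ⟨f₁ + g₁, f₂ + g₂, ?_, ?_, ?_⟩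
    · intro y g; simp [h1 y g, k1 y g]
    · intro x g; simp [h2 x g, k2 x g]
    · rw [ContinuousMap.add_comp, ContinuousMap.add_comp]; abel
  neg_mem' := by
    rintro h ⟨f₁, f₂, h1, h2, rfl⟩
    refine ⟨-f₁, -f₂, ?_, ?_, ?_⟩
    · intro y g; simp [h1 y g]
    · intro x g; simp [h2 x g]
    · rw [ContinuousMap.neg_comp, ContinuousMap.neg_comp]; abel

/-!
Write `k f = δ₁ f₁ + δ₂ f₂` with `δ₁, δ₂` the coboundaries of `φ̃, ψ̃`. The key fact is that a
continuous `F : W → ℤ` vanishing at one point with `δ_T F ≡ 0 mod k` for a minimal `T` is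
divisible by `k`, since `F mod k` is `T`-invariant and locally constant, hence constant.

Read on the slices `{x} × Y × G`, twisted by right translation in `G`, the identity says that
`φ × ξ` moves the slices of `f₁` only by coboundaries of `ψ × η` (vanishing at `y₀`) plus
multiples of `k`. The slice at `x₀` is zero, so by minimality of `φ × ξ` every slice is of this
form, and gluing gives `f₁ = δ₂ a + k c`. Then `k (f - δ₁ c) = δ₂ (f₂ + δ₁ a)`, and the key fact on
each slice makes `f₂ + δ₁ a = k b`, so `f = δ₁ c + δ₂ b`. Finally `c` is made to vanish at `x₀`
by subtracting `δ₂ W` for a `W` pulled back from `Y × G`, again by the key fact, and adding `δ₁ W`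
to `b`, using `δ₁ δ₂ = δ₂ δ₁`.
-/

open Filter Topology

section General

variable {W V β : Type*} [TopologicalSpace W] [TopologicalSpace V]

theorem IsMinimalHomeo.apply_eq_of_isLocallyConstant {T : W ≃ₜ W} (hT : IsMinimalHomeo T)
    {u : W → β} (hu : IsLocallyConstant u) (hinv : ∀ w, u (T w) = u w) (w w' : W) :
    u w = u w' := by
  have horbit : ∀ n : ℤ, u ((T.toEquiv ^ n) w') = u w' := by
    intro n
    induction n using Int.induction_on with
    | zero => rfl
    | succ n ih =>
      rw [add_comm, zpow_add, zpow_one, Equiv.Perm.mul_apply]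
      exact (hinv _).trans ih
    | pred n ih =>
      rw [sub_eq_add_neg, add_comm, zpow_add, zpow_neg_one, Equiv.Perm.mul_apply, ← ih, ← hinv]
      exact congrArg u (T.toEquiv.apply_symm_apply _)
  have hsub : closure (Set.range fun n : ℤ => (T.toEquiv ^ n) w') ⊆ {x | u x = u w'} :=
    closure_minimal (Set.range_subset_iff.2 horbit) (hu.isClosed_fiber _)
  exact hsub ((hT w').closure_eq ▸ Set.mem_univ w)

instance {M : Type*} [TopologicalSpace M] [AddMonoid M] [ContinuousAdd M] [IsAddTorsionFree M] :
    IsAddTorsionFree C(W, M) :=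
  DFunLike.coe_injective.isAddTorsionFree ContinuousMap.coeFnAddMonoidHom

def coboundary (T : W ≃ₜ W) : C(W, ℤ) →+ C(W, ℤ) :=
  AddMonoidHom.id _ - ContinuousMap.compAddMonoidHom' (T.symm : C(W, W))

@[simp]
theorem coboundary_apply (T : W ≃ₜ W) (f : C(W, ℤ)) (w : W) :
    coboundary T f w = f w - f (T.symm w) := rfl

theorem coboundary_comp (T : W ≃ₜ W) (T' : V ≃ₜ V) (σ : C(W, V))
    (h : ∀ w, σ (T w) = T' (σ w)) (f : C(V, ℤ)) :
    coboundary T (f.comp σ) = (coboundary T' f).comp σ := by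
  ext w
  have : σ (T.symm w) = T'.symm (σ w) := by
    rw [T'.eq_symm_apply, ← h, T.apply_symm_apply]
  simp [this]

theorem coboundary_comm {T T' : W ≃ₜ W} (h : ∀ w, T (T' w) = T' (T w)) (f : C(W, ℤ)) :
    coboundary T (coboundary T' f) = coboundary T' (coboundary T f) := by
  have hsymm : ∀ w, T.symm (T'.symm w) = T'.symm (T.symm w) := fun w =>
    (T.trans T').injective
      (by simp only [Homeomorph.trans_apply, Homeomorph.apply_symm_apply, ← h])
  ext w
  simp only [coboundary_apply, hsymm]
  ring

def vanishingOn (A : Set W) : AddSubgroup C(W, ℤ) where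
  carrier := {f | ∀ w ∈ A, f w = 0}
  zero_mem' _ _ := rfl
  add_mem' hf hg w hw := by simp [hf w hw, hg w hw]
  neg_mem' hf w hw := by simp [hf w hw]

theorem coboundary_mem_vanishingOn {T : W ≃ₜ W} {A : Set W} (hA : ∀ w ∈ A, T.symm w ∈ A)
    {f : C(W, ℤ)} (hf : f ∈ vanishingOn A) : coboundary T f ∈ vanishingOn A := fun w hw => by
  simp [hf w hw, hf _ (hA w hw)]

theorem IsMinimalHomeo.dvd_of_dvd_coboundary {T : W ≃ₜ W} (hT : IsMinimalHomeo T) (k : ℤ)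
    {F : C(W, ℤ)} (hF : ∀ w, k ∣ coboundary T F w) {w₀ : W} (h₀ : F w₀ = 0) (w : W) :
    k ∣ F w := by
  have hinv : ∀ w, F (T w) % k = F w % k := fun w =>
    (Int.modEq_iff_dvd.2 (by simpa using hF (T w))).symm
  have hlc : IsLocallyConstant fun w => F w % k :=
    ((IsLocallyConstant.iff_continuous F).2 F.continuous).comp (· % k)
  have := hT.apply_eq_of_isLocallyConstant hlc hinv w w₀
  rw [h₀, Int.zero_emod] at this
  exact Int.dvd_of_emod_eq_zero this

theorem exists_nsmul_eq_of_forall_dvd {A : Set W} {k : ℕ} {F : C(W, ℤ)}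
    (hF : F ∈ vanishingOn A) (hdvd : ∀ w, (k : ℤ) ∣ F w) : ∃ b ∈ vanishingOn A, k • b = F :=
  ⟨⟨fun w => F w / k, (continuous_of_discreteTopology (f := (· / (k : ℤ)))).comp F.continuous⟩,
    fun w hw => by simp [hF w hw], by ext w; simp [Int.mul_ediv_cancel' (hdvd w)]⟩

theorem IsMinimalHomeo.exists_coboundary_eq_of_nsmul_eq {T : W ≃ₜ W} (hT : IsMinimalHomeo T)
    {A : Set W} {w₀ : W} (hw₀ : w₀ ∈ A) {k : ℕ} (hk : k ≠ 0) {c F : C(W, ℤ)}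
    (hF : F ∈ vanishingOn A) (h : k • c = coboundary T F) :
    ∃ b ∈ vanishingOn A, c = coboundary T b := by
  have hdvd : ∀ w, (k : ℤ) ∣ coboundary T F w := fun w => ⟨c w, by simp [← h]⟩
  obtain ⟨b, hb, rfl⟩ :=
    exists_nsmul_eq_of_forall_dvd hF (hT.dvd_of_dvd_coboundary k hdvd (hF w₀ hw₀))
  exact ⟨b, hb, nsmul_right_injective hk (h.trans (map_nsmul _ _ _))⟩

theorem ContinuousMap.isLocallyConstant_curry [CompactSpace V] [TopologicalSpace β]
    [DiscreteTopology β] (F : C(W × V, β)) :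
    IsLocallyConstant F.curry := by
  have hF := (IsLocallyConstant.iff_continuous F).2 F.continuous
  refine (IsLocallyConstant.iff_eventually_eq _).2 fun w => ?_
  have : ∀ᶠ w' in 𝓝 w, ∀ v ∈ Set.univ, F (w', v) = F (w, v) := by
    refine isCompact_univ.eventually_forall_of_forall_eventually fun v _ => ?_
    have hv : ∀ᶠ v' in 𝓝 v, F (w, v') = F (w, v) :=
      ((IsLocallyConstant.iff_continuous _).2 (F.curry w).continuous).eventually_eq v
    have hslice : ∀ᶠ z : W × V in 𝓝 (w, v), F (w, z.2) = F (w, v) :=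
      continuousAt_snd.eventually (p := fun v' => F (w, v') = F (w, v)) hv
    filter_upwards [hF.eventually_eq (w, v), hslice] with z h₁ h₂ using h₁.trans h₂.symm
  filter_upwards [this] with w' hw' using ContinuousMap.ext fun v => hw' v trivial

theorem IsLocallyConstant.exists_curry_eq [TopologicalSpace β] {H : W → C(V, β)}
    (hH : IsLocallyConstant H) : ∃ F : C(W × V, β), F.curry = H := by
  refine ⟨⟨fun z => H z.1 z.2, continuous_iff_continuousAt.2 fun z => ?_⟩, rfl⟩
  refine ((H z.1).continuous.comp continuous_snd).continuousAt.congr ?_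
  filter_upwards [continuousAt_fst.eventually (hH.eventually_eq z.1)] with z' hz'
  simp [hz']

def coboundaryAddMultiples (S : W ≃ₜ W) (A : Set W) (k : ℕ) : AddSubgroup C(W, ℤ) :=
  (vanishingOn A).map (coboundary S) ⊔ (DistribSMul.toAddMonoidHom C(W, ℤ) k).range

theorem mem_coboundaryAddMultiples {S : W ≃ₜ W} {A : Set W} {k : ℕ} {u : C(W, ℤ)} :
    u ∈ coboundaryAddMultiples S A k ↔ ∃ a ∈ vanishingOn A, ∃ c, coboundary S a + k • c = u := by
  simp [coboundaryAddMultiples, AddSubgroup.mem_sup]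

end General

section SkewProducts

variable {φ : X ≃ₜ X} {ψ : Y ≃ₜ Y} {ξ : C(X, G)} {η : C(Y, G)}

theorem phiTilde_psiTilde_comm (z : X × Y × G) :
    phiTilde φ ξ (psiTilde ψ η z) = psiTilde ψ η (phiTilde φ ξ z) := by
  simp [phiTilde, psiTilde, mul_right_comm]

def twistedSlice (p : X × G) : C(Y × G, X × Y × G) :=
  ⟨fun v => (p.1, v.1, v.2 * p.2), by fun_prop⟩

theorem phiTilde_symm_twistedSlice_skewProd (p : X × G) (v : Y × G) :
    (phiTilde φ ξ).symm (twistedSlice (skewProd φ ξ p) v) = twistedSlice p v :=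
  (phiTilde φ ξ).symm_apply_eq.2 (by simp [twistedSlice, skewProd, phiTilde, mul_assoc])

theorem psiTilde_symm_twistedSlice (p : X × G) (v : Y × G) :
    (psiTilde ψ η).symm (twistedSlice p v) = twistedSlice p ((skewProd ψ η).symm v) :=
  congrArg (Prod.mk p.1) (congrArg (Prod.mk _) (mul_right_comm _ _ _))

theorem psiTilde_symm_apply (z : X × Y × G) :
    (psiTilde ψ η).symm z = (z.1, (skewProd ψ η).symm z.2) := rfl

theorem comp_twistedSlice_one (F : C(X × Y × G, ℤ)) (x : X) :
    F.comp (twistedSlice (x, 1)) = F.curry x := by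
  ext; simp [twistedSlice]

theorem isLocallyConstant_comp_twistedSlice [CompactSpace Y] [Finite G] [DiscreteTopology G]
    (F : C(X × Y × G, ℤ)) : IsLocallyConstant fun p : X × G => F.comp (twistedSlice p) :=
  ((ContinuousMap.isLocallyConstant_curry F).comp_continuous continuous_fst).comp₂
    ((IsLocallyConstant.iff_continuous _).2 continuous_snd)
    fun (u : C(Y × G, ℤ)) (h : G) => u.comp ⟨fun v : Y × G => (v.1, v.2 * h), by fun_prop⟩

theorem comp_twistedSlice_mem_coboundaryAddMultiples [CompactSpace Y] [Finite G]
    [DiscreteTopology G] (hξ : IsMinimalHomeo (skewProd φ ξ)) {x₀ : X} {y₀ : Y} {k : ℕ}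
    {f f₁ f₂ : C(X × Y × G, ℤ)} (hf₁ : ∀ y g, f₁ (x₀, y, g) = 0)
    (hf₂ : f₂ ∈ vanishingOn {z : X × Y × G | z.2.1 = y₀})
    (hf : k • f = coboundary (phiTilde φ ξ) f₁ + coboundary (psiTilde ψ η) f₂) (p : X × G) :
    f₁.comp (twistedSlice p) ∈ coboundaryAddMultiples (skewProd ψ η) {v | v.1 = y₀} k := by
  set E := coboundaryAddMultiples (skewProd ψ η) {v : Y × G | v.1 = y₀} k
  have hstep : ∀ p : X × G, (f₁.comp (twistedSlice (skewProd φ ξ p)) : C(Y × G, ℤ) ⧸ E)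
      = f₁.comp (twistedSlice p) := by
    intro p
    set σ := twistedSlice (Y := Y) (skewProd φ ξ p)
    refine (QuotientAddGroup.eq_iff_sub_mem).2 (mem_coboundaryAddMultiples.2
      ⟨-f₂.comp σ, neg_mem fun v hv => hf₂ _ hv, f.comp σ, ?_⟩)
    ext v
    have hz := congr(($hf) (σ v))
    simp only [nsmul_eq_mul, ContinuousMap.mul_apply, ContinuousMap.natCast_apply,
      ContinuousMap.add_apply, ContinuousMap.sub_apply, ContinuousMap.neg_apply,
      ContinuousMap.comp_apply, coboundary_apply, map_neg, neg_sub, σ,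
      phiTilde_symm_twistedSlice_skewProd, psiTilde_symm_twistedSlice] at hz ⊢
    linarith
  have hbase : f₁.comp (twistedSlice (x₀, 1)) = 0 := by
    ext v; simp [twistedSlice, hf₁]
  have := hξ.apply_eq_of_isLocallyConstant
    ((isLocallyConstant_comp_twistedSlice f₁).comp (QuotientAddGroup.mk (s := E)))
    hstep p (x₀, 1)
  rwa [Function.comp_apply, Function.comp_apply, hbase, QuotientAddGroup.mk_zero,
    QuotientAddGroup.eq_zero_iff] at this

theorem exists_eq_coboundary_psiTilde_add_nsmul [CompactSpace Y] [Finite G] [DiscreteTopology G]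
    {y₀ : Y} {k : ℕ} {F : C(X × Y × G, ℤ)}
    (hF : ∀ x, F.curry x ∈ coboundaryAddMultiples (skewProd ψ η) {v | v.1 = y₀} k) :
    ∃ a ∈ vanishingOn {z : X × Y × G | z.2.1 = y₀}, ∃ c,
      F = coboundary (psiTilde ψ η) a + k • c := by
  have hsel : ∀ u : C(Y × G, ℤ), ∃ ac : C(Y × G, ℤ) × C(Y × G, ℤ),
      u ∈ coboundaryAddMultiples (skewProd ψ η) {v | v.1 = y₀} k →
        ac.1 ∈ vanishingOn {v | v.1 = y₀} ∧ coboundary (skewProd ψ η) ac.1 + k • ac.2 = u := by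
    intro u
    by_cases hu : u ∈ coboundaryAddMultiples (skewProd ψ η) {v | v.1 = y₀} k
    · obtain ⟨a, ha, c, rfl⟩ := mem_coboundaryAddMultiples.1 hu
      exact ⟨(a, c), fun _ => ⟨ha, rfl⟩⟩
    · exact ⟨0, fun h => absurd h hu⟩
  choose sel hsel using hsel
  have hlc := ContinuousMap.isLocallyConstant_curry F
  obtain ⟨a, ha⟩ := (hlc.comp fun u => (sel u).1).exists_curry_eq
  obtain ⟨c, hc⟩ := (hlc.comp fun u => (sel u).2).exists_curry_eq
  have ha' (x : X) : a.curry x = (sel (F.curry x)).1 := congrFun ha x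
  have hc' (x : X) : c.curry x = (sel (F.curry x)).2 := congrFun hc x
  refine ⟨a, fun z hz => ?_, c, ?_⟩
  · exact (DFunLike.congr_fun (ha' z.1) z.2).trans ((hsel _ (hF z.1)).1 z.2 hz)
  · ext z
    change F.curry z.1 z.2 = (coboundary (skewProd ψ η) (a.curry z.1) + k • c.curry z.1) z.2
    rw [ha', hc', (hsel _ (hF z.1)).2]

theorem exists_eq_coboundary_add_coboundary (hη : IsMinimalHomeo (skewProd ψ η)) {y₀ : Y}
    {k : ℕ} (hk : k ≠ 0) {f a c f₂ : C(X × Y × G, ℤ)}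
    (ha : a ∈ vanishingOn {z : X × Y × G | z.2.1 = y₀})
    (hf₂ : f₂ ∈ vanishingOn {z : X × Y × G | z.2.1 = y₀})
    (hf : k • f = coboundary (phiTilde φ ξ) (coboundary (psiTilde ψ η) a + k • c) +
      coboundary (psiTilde ψ η) f₂) :
    ∃ b ∈ vanishingOn {z : X × Y × G | z.2.1 = y₀},
      f = coboundary (phiTilde φ ξ) c + coboundary (psiTilde ψ η) b := by
  set F := f₂ + coboundary (phiTilde φ ξ) a
  have hF : F ∈ vanishingOn {z : X × Y × G | z.2.1 = y₀} :=
    add_mem hf₂ (coboundary_mem_vanishingOn (fun _ hz => hz) ha)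
  have hkF : k • (f - coboundary (phiTilde φ ξ) c) = coboundary (psiTilde ψ η) F := by
    rw [smul_sub, hf, map_add, map_nsmul, map_add, coboundary_comm phiTilde_psiTilde_comm]
    abel
  have hdvd : ∀ z, (k : ℤ) ∣ F z := fun z =>
    hη.dvd_of_dvd_coboundary k (F := F.curry z.1)
      (fun v => ⟨(f - coboundary (phiTilde φ ξ) c) (z.1, v),
        by simpa [psiTilde_symm_apply] using congr(($hkF) (z.1, v)).symm⟩)
      (w₀ := (y₀, 1)) (hF _ rfl) z.2
  obtain ⟨b, hb, hbF⟩ := exists_nsmul_eq_of_forall_dvd hF hdvd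
  rw [← hbF] at hkF
  exact ⟨b, hb, eq_add_of_sub_eq' (nsmul_right_injective hk (hkF.trans (map_nsmul _ _ _)))⟩

theorem mem_Dprime_of_eq_coboundary_add_coboundary (hη : IsMinimalHomeo (skewProd ψ η))
    {x₀ : X} {y₀ : Y} {k : ℕ} (hk : k ≠ 0) {f f₁ a b c : C(X × Y × G, ℤ)}
    (hf₁ : ∀ y g, f₁ (x₀, y, g) = 0)
    (hf₁a : f₁ = coboundary (psiTilde ψ η) a + k • c)
    (ha : a ∈ vanishingOn {z : X × Y × G | z.2.1 = y₀})
    (hb : b ∈ vanishingOn {z : X × Y × G | z.2.1 = y₀})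
    (hf : f = coboundary (phiTilde φ ξ) c + coboundary (psiTilde ψ η) b) :
    f ∈ Dprime φ ψ ξ η x₀ y₀ := by
  have hc₀ : k • c.curry x₀ = coboundary (skewProd ψ η) (-a.curry x₀) := by
    ext v
    have := congr(($hf₁a) (x₀, v))
    simp only [hf₁, nsmul_eq_mul, ContinuousMap.add_apply, ContinuousMap.mul_apply,
      ContinuousMap.natCast_apply, ContinuousMap.curry_apply, ContinuousMap.neg_apply,
      coboundary_apply, psiTilde_symm_apply, map_neg, neg_sub] at this ⊢
    linarith
  obtain ⟨w, hw, hcw⟩ := hη.exists_coboundary_eq_of_nsmul_eq (A := {v | v.1 = y₀})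
    (w₀ := (y₀, 1)) rfl hk (fun v hv => by simp [ha (x₀, v) hv]) hc₀
  set W : C(X × Y × G, ℤ) := w.comp ContinuousMap.snd
  have hW : W ∈ vanishingOn {z : X × Y × G | z.2.1 = y₀} := fun z hz => hw z.2 hz
  refine ⟨c - coboundary (psiTilde ψ η) W, b + coboundary (phiTilde φ ξ) W, fun y g => ?_,
    fun x g => add_mem hb (coboundary_mem_vanishingOn (fun _ hz => hz) hW) (x, y₀, g) rfl, ?_⟩
  · simpa [W, psiTilde_symm_apply, sub_eq_zero] using DFunLike.congr_fun hcw (y, g)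
  · show f = coboundary (phiTilde φ ξ) (c - coboundary (psiTilde ψ η) W) +
      coboundary (psiTilde ψ η) (b + coboundary (phiTilde φ ξ) W)
    rw [hf, map_sub, map_add, coboundary_comm phiTilde_psiTilde_comm]
    abel

end SkewProducts

theorem statement14_general
    (X Y G : Type) [TopologicalSpace X] [TopologicalSpace Y]
    [TopologicalSpace G] [DiscreteTopology G] [CommGroup G] [IsTopologicalGroup G] [Fintype G]
    (hY : IsCantor Y)
    (φ : X ≃ₜ X) (ψ : Y ≃ₜ Y)
    (ξ : C(X, G)) (η : C(Y, G))
    (hξ : IsMinimalHomeo (skewProd φ ξ))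
    (hη : IsMinimalHomeo (skewProd ψ η))
    (x₀ : X) (y₀ : Y) :
    ∀ (h : C(X × Y × G, ℤ) ⧸ Dprime φ ψ ξ η x₀ y₀) (k : ℕ), k ≠ 0 → k • h = 0 → h = 0 := by
  have : CompactSpace Y := hY.2.1
  intro h k hk hkh
  induction h using QuotientAddGroup.induction_on with | H f => ?_
  rw [← QuotientAddGroup.mk_nsmul, QuotientAddGroup.eq_zero_iff] at hkh
  rw [QuotientAddGroup.eq_zero_iff]
  obtain ⟨f₁, f₂, hf₁, hf₂, hf⟩ := hkh
  have hf₂ : f₂ ∈ vanishingOn {z : X × Y × G | z.2.1 = y₀} := by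
    rintro ⟨x, y, g⟩ rfl
    exact hf₂ x g
  obtain ⟨a, ha, c, hf₁a⟩ := exists_eq_coboundary_psiTilde_add_nsmul fun x => by
    simpa [comp_twistedSlice_one] using
      comp_twistedSlice_mem_coboundaryAddMultiples hξ hf₁ hf₂ hf (x, 1)
  obtain ⟨b, hb, hfb⟩ := exists_eq_coboundary_add_coboundary hη hk ha hf₂ (hf₁a ▸ hf)
  exact mem_Dprime_of_eq_coboundary_add_coboundary hη hk hf₁ hf₁a ha hb hfb

/-- Lemma 3.3 (AFpart): for Cantor minimal systems (X,φ), (Y,ψ) and non-degenerate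
G-valued cocycles ξ, η, the quotient C(Z,ℤ)/D′ is torsion free. -/
theorem statement14
    (X Y G : Type) [TopologicalSpace X] [TopologicalSpace Y]
    [TopologicalSpace G] [DiscreteTopology G] [CommGroup G] [IsTopologicalGroup G] [Fintype G]
    (hX : IsCantor X) (hY : IsCantor Y)
    (φ : X ≃ₜ X) (ψ : Y ≃ₜ Y)
    (hφ : IsMinimalHomeo φ) (hψ : IsMinimalHomeo ψ)
    (ξ : C(X, G)) (η : C(Y, G))
    (hξ : IsMinimalHomeo (skewProd φ ξ))
    (hη : IsMinimalHomeo (skewProd ψ η))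
    (x₀ : X) (y₀ : Y) :
    ∀ (h : C(X × Y × G, ℤ) ⧸ Dprime φ ψ ξ η x₀ y₀) (k : ℕ), k ≠ 0 → k • h = 0 → h = 0 :=
  statement14_general X Y G hY φ ψ ξ η hξ hη x₀ y₀
end
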